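/- Fix T > 0 and λ̄, λ, θ ∈ ℝ, and let v be a C^∞ function on [0,T] × (0,∞) with ∂_x v > 0 and ∂_x² v < 0 solving the Merton PDE with parameter λ̄; set R = −∂_x v/∂_x² v, D₁ w = R ∂_x w, and D₂ w = R² ∂_x² w. Then at every point of [0,T) × (0,∞), (∂_t + λ² R ∂_x + (λ²/2) R² ∂_x²)( −(1/2) θ D₁ v ) = −(1/2) θ (λ² − λ̄²)( D₁² v + (1/2) D₂ D₁ v ). -/

import Mathlib

open Set

/-- Partial derivative in the time variable. -/
noncomputable def partialT (v : ℝ → ℝ → ℝ) : ℝ → ℝ → ℝ := fun t x => deriv (fun s => v s x) t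

/-- Partial derivative in the wealth variable. -/
noncomputable def partialX (v : ℝ → ℝ → ℝ) : ℝ → ℝ → ℝ := fun t x => deriv (fun y => v t y) x

/-- Second partial derivative in the wealth variable. -/
noncomputable def partialXX (v : ℝ → ℝ → ℝ) : ℝ → ℝ → ℝ := partialX (partialX v)

/-- The first-order operator `D₁ w = R ∂ₓ w`. -/
noncomputable def D1 (R w : ℝ → ℝ → ℝ) : ℝ → ℝ → ℝ := fun t x => R t x * partialX w t x

/-- The second-order operator `D₂ w = R² ∂ₓₓ w`. -/
noncomputable def D2 (R w : ℝ → ℝ → ℝ) : ℝ → ℝ → ℝ := fun t x =>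
  (R t x) ^ 2 * partialXX w t x

section helpers
variable {w : ℝ → ℝ → ℝ}

lemma curveX (t x : ℝ) : HasDerivAt (fun y : ℝ => (t, y)) ((0:ℝ), (1:ℝ)) x :=
  (hasDerivAt_const x t).prodMk (hasDerivAt_id x)

lemma curveT (t x : ℝ) : HasDerivAt (fun s : ℝ => (s, x)) ((1:ℝ), (0:ℝ)) t :=
  (hasDerivAt_id t).prodMk (hasDerivAt_const t x)

lemma partialX_eq (hw : ContDiff ℝ (⊤ : ℕ∞) (fun p : ℝ × ℝ => w p.1 p.2)) (t x : ℝ) :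
    partialX w t x = fderiv ℝ (fun p : ℝ × ℝ => w p.1 p.2) (t, x) (0, 1) :=
  (((hw.differentiable (by simp) (t, x)).hasFDerivAt).comp_hasDerivAt x (curveX t x)).deriv

lemma partialT_eq (hw : ContDiff ℝ (⊤ : ℕ∞) (fun p : ℝ × ℝ => w p.1 p.2)) (t x : ℝ) :
    partialT w t x = fderiv ℝ (fun p : ℝ × ℝ => w p.1 p.2) (t, x) (1, 0) :=
  by
  have h := ((hw.differentiable (by simp) (t, x)).hasFDerivAt).comp_hasDerivAt t (curveT t x)
  exact h.deriv

lemma sliceX_hasDerivAt (hw : ContDiff ℝ (⊤ : ℕ∞) (fun p : ℝ × ℝ => w p.1 p.2)) (t x : ℝ) :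
    HasDerivAt (fun y => w t y) (partialX w t x) x := by
  have h := ((hw.differentiable (by simp) (t, x)).hasFDerivAt).comp_hasDerivAt x (curveX t x)
  rw [← partialX_eq hw t x] at h
  exact h

lemma sliceT_hasDerivAt (hw : ContDiff ℝ (⊤ : ℕ∞) (fun p : ℝ × ℝ => w p.1 p.2)) (t x : ℝ) :
    HasDerivAt (fun s => w s x) (partialT w t x) t := by
  have h := ((hw.differentiable (by simp) (t, x)).hasFDerivAt).comp_hasDerivAt t (curveT t x)
  rw [← partialT_eq hw t x] at h
  exact h

lemma contDiff_partialX (hw : ContDiff ℝ (⊤ : ℕ∞) (fun p : ℝ × ℝ => w p.1 p.2)) :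
    ContDiff ℝ (⊤ : ℕ∞) (fun p : ℝ × ℝ => partialX w p.1 p.2) := by
  have h : (fun p : ℝ × ℝ => partialX w p.1 p.2)
      = fun p : ℝ × ℝ => fderiv ℝ (fun p : ℝ × ℝ => w p.1 p.2) p ((0:ℝ), (1:ℝ)) := by
    funext p
    exact partialX_eq hw p.1 p.2
  rw [h]
  exact (hw.fderiv_right (le_of_eq (by simp))).clm_apply contDiff_const

lemma clairaut (hw : ContDiff ℝ (⊤ : ℕ∞) (fun p : ℝ × ℝ => w p.1 p.2)) (t x : ℝ) :
    partialT (partialX w) t x = partialX (partialT w) t x := by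
  set W : ℝ × ℝ → ℝ := fun p => w p.1 p.2 with hW
  have hd : Differentiable ℝ W := hw.differentiable (by simp)
  have hf' : ∀ y, HasFDerivAt W (fderiv ℝ W y) y := fun y => (hd y).hasFDerivAt
  have hf'' : HasFDerivAt (fderiv ℝ W) (fderiv ℝ (fderiv ℝ W) (t, x)) (t, x) :=
    (((hw.fderiv_right (m := (⊤ : ℕ∞)) (le_of_eq (by simp))).differentiable (by simp)) (t, x)).hasFDerivAt
  have hsymm := second_derivative_symmetric hf' hf'' ((1:ℝ), (0:ℝ)) ((0:ℝ), (1:ℝ))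
  have h1 : partialT (partialX w) t x = fderiv ℝ (fderiv ℝ W) (t, x) (1, 0) (0, 1) := by
    have e : (fun s => partialX w s x) = fun s => fderiv ℝ W (s, x) (0, 1) :=
      funext fun s => partialX_eq hw s x
    have h2 : HasDerivAt (fun s => fderiv ℝ W (s, x)) (fderiv ℝ (fderiv ℝ W) (t, x) (1, 0)) t :=
      hf''.comp_hasDerivAt t (curveT t x)
    have h3 := h2.clm_apply (hasDerivAt_const t ((0:ℝ), (1:ℝ)))
    simp only [map_zero, add_zero] at h3
    show deriv (fun s => partialX w s x) t = _
    rw [e]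
    exact h3.deriv
  have h4 : partialX (partialT w) t x = fderiv ℝ (fderiv ℝ W) (t, x) (0, 1) (1, 0) := by
    have e : (fun y => partialT w t y) = fun y => fderiv ℝ W (t, y) (1, 0) :=
      funext fun y => partialT_eq hw t y
    have h2 : HasDerivAt (fun y => fderiv ℝ W (t, y)) (fderiv ℝ (fderiv ℝ W) (t, x) (0, 1)) x :=
      hf''.comp_hasDerivAt x (curveX t x)
    have h3 := h2.clm_apply (hasDerivAt_const x ((1:ℝ), (0:ℝ)))
    simp only [map_zero, add_zero] at h3
    show deriv (fun y => partialT w t y) x = _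
    rw [e]
    exact h3.deriv
  rw [h1, h4, hsymm]

end helpers

/-- Computation of `L₂ v^{π⁰,(2,0)}`: for `v` solving the Merton PDE with parameter `λ̄`,
`(∂ₜ + λ² R ∂ₓ + (λ²/2) R² ∂ₓₓ)(−(1/2) θ D₁ v) = −(1/2) θ (λ² − λ̄²)(D₁² v + (1/2) D₂ D₁ v)`
on `[0,T) × (0,∞)`. -/
theorem L2_of_v2_term (T lamBar lam θ : ℝ) (hT : 0 < T)
    (v : ℝ → ℝ → ℝ)
    (hsmooth : ContDiff ℝ (⊤ : ℕ∞) (fun p : ℝ × ℝ => v p.1 p.2))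
    (hvx_pos : ∀ t ∈ Icc (0 : ℝ) T, ∀ x ∈ Ioi (0 : ℝ), 0 < partialX v t x)
    (hvxx_neg : ∀ t ∈ Icc (0 : ℝ) T, ∀ x ∈ Ioi (0 : ℝ), partialXX v t x < 0)
    (hpde : ∀ t ∈ Ico (0 : ℝ) T, ∀ x ∈ Ioi (0 : ℝ),
      partialT v t x - lamBar ^ 2 / 2 * (partialX v t x) ^ 2 / partialXX v t x = 0)
    (R : ℝ → ℝ → ℝ)
    (hR : ∀ t x, R t x = -(partialX v t x) / partialXX v t x) :
    ∀ t ∈ Ico (0 : ℝ) T, ∀ x ∈ Ioi (0 : ℝ),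
      partialT (fun t' x' => -(1 / 2) * θ * D1 R v t' x') t x
          + lam ^ 2 * R t x * partialX (fun t' x' => -(1 / 2) * θ * D1 R v t' x') t x
          + lam ^ 2 / 2 * (R t x) ^ 2
              * partialXX (fun t' x' => -(1 / 2) * θ * D1 R v t' x') t x
        = -(1 / 2) * θ * (lam ^ 2 - lamBar ^ 2)
            * (D1 R (D1 R v) t x + 1 / 2 * D2 R (D1 R v) t x) := by

  intro t ht x hx
  have hDv : D1 R v = fun a b => -partialX v a b / partialXX v a b * partialX v a b := by
    funext a b
    simp only [D1, hR]
  rw [hDv]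
  simp only [D1, D2, hR]
  have htI : t ∈ Icc (0:ℝ) T := ⟨ht.1, ht.2.le⟩
  have hbne : ∀ y ∈ Ioi (0:ℝ), partialXX v t y ≠ 0 := fun y hy => (hvxx_neg t htI y hy).ne
  have hbx : partialXX v t x ≠ 0 := hbne x hx
  have hA := contDiff_partialX hsmooth
  have hB : ContDiff ℝ (⊤ : ℕ∞) (fun p : ℝ × ℝ => partialXX v p.1 p.2) := contDiff_partialX hA
  have hG : ContDiff ℝ (⊤ : ℕ∞) (fun p : ℝ × ℝ => partialX (partialXX v) p.1 p.2) := contDiff_partialX hB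
  have ha' : ∀ y : ℝ, HasDerivAt (fun z => partialX v t z) (partialXX v t y) y :=
    fun y => sliceX_hasDerivAt hA t y
  have hb' : ∀ y : ℝ, HasDerivAt (fun z => partialXX v t z) (partialX (partialXX v) t y) y :=
    fun y => sliceX_hasDerivAt hB t y
  have hg' : ∀ y : ℝ, HasDerivAt (fun z => partialX (partialXX v) t z)
      (partialX (partialX (partialXX v)) t y) y := fun y => sliceX_hasDerivAt hG t y
  have hAt : HasDerivAt (fun s => partialX v s x) (partialT (partialX v) t x) t :=
    sliceT_hasDerivAt hA t x
  have hBt : HasDerivAt (fun s => partialXX v s x) (partialT (partialXX v) t x) t :=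
    sliceT_hasDerivAt hB t x
  have hasq : ∀ y : ℝ, HasDerivAt (fun z => partialX v t z ^ 2)
      (2 * partialX v t y * partialXX v t y) y := fun y => by simpa using (ha' y).fun_pow 2
  have hbsq : HasDerivAt (fun y => partialXX v t y ^ 2)
      (2 * partialXX v t x * partialX (partialXX v) t x) x := by simpa using (hb' x).fun_pow 2
  -- first spatial derivative of the time derivative, via the PDE
  have hm1set : ∀ y ∈ Ioi (0:ℝ), partialX (partialT v) t y =
      (lamBar ^ 2 / 2 * (2 * partialX v t y * partialXX v t y) * partialXX v t y
        - lamBar ^ 2 / 2 * partialX v t y ^ 2 * partialX (partialXX v) t y)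
        / partialXX v t y ^ 2 := by
    intro y hy
    have hev : (fun z => partialT v t z) =ᶠ[nhds y]
        (fun z => lamBar ^ 2 / 2 * partialX v t z ^ 2 / partialXX v t z) := by
      filter_upwards [isOpen_Ioi.mem_nhds hy] with z hz
      exact sub_eq_zero.mp (hpde t ht z hz)
    show deriv (fun z => partialT v t z) y = _
    rw [hev.deriv_eq]
    exact (((hasq y).const_mul (lamBar ^ 2 / 2)).fun_div (hb' y) (hbne y hy)).deriv
  -- derivative combinators for the goal quantities
  have H1 := ((hAt.fun_neg.fun_div hBt hbx).fun_mul hAt).const_mul (-(1 / 2) * θ)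
  have H2c := ((ha' x).fun_neg.fun_div (hb' x) hbx).fun_mul (ha' x)
  have H2 := H2c.const_mul (-(1 / 2) * θ)
  have hpsi : ∀ y ∈ Ioi (0:ℝ),
      partialX (fun a b => -partialX v a b / partialXX v a b * partialX v a b) t y
        = (-partialXX v t y * partialXX v t y - -partialX v t y * partialX (partialXX v) t y)
            / partialXX v t y ^ 2 * partialX v t y
          + -partialX v t y / partialXX v t y * partialXX v t y := by
    intro y hy
    exact (((ha' y).fun_neg.fun_div (hb' y) (hbne y hy)).fun_mul (ha' y)).deriv
  have hpsiU : ∀ y ∈ Ioi (0:ℝ),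
      partialX (fun t' x' => -(1 / 2) * θ *
          (-partialX v t' x' / partialXX v t' x' * partialX v t' x')) t y
        = -(1 / 2) * θ *
          ((-partialXX v t y * partialXX v t y - -partialX v t y * partialX (partialXX v) t y)
            / partialXX v t y ^ 2 * partialX v t y
          + -partialX v t y / partialXX v t y * partialXX v t y) := by
    intro y hy
    exact ((((ha' y).fun_neg.fun_div (hb' y) (hbne y hy)).fun_mul (ha' y)).const_mul (-(1 / 2) * θ)).deriv
  have hevu : (fun y => partialX (fun a b =>
        -partialX v a b / partialXX v a b * partialX v a b) t y) =ᶠ[nhds x]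
      (fun y => (-partialXX v t y * partialXX v t y
            - -partialX v t y * partialX (partialXX v) t y)
            / partialXX v t y ^ 2 * partialX v t y
          + -partialX v t y / partialXX v t y * partialXX v t y) := by
    filter_upwards [isOpen_Ioi.mem_nhds hx] with y hy
    exact hpsi y hy
  have hevU : (fun y => partialX (fun t' x' => -(1 / 2) * θ *
        (-partialX v t' x' / partialXX v t' x' * partialX v t' x')) t y) =ᶠ[nhds x]
      (fun y => -(1 / 2) * θ *
          ((-partialXX v t y * partialXX v t y
            - -partialX v t y * partialX (partialXX v) t y)
            / partialXX v t y ^ 2 * partialX v t y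
          + -partialX v t y / partialXX v t y * partialXX v t y)) := by
    filter_upwards [isOpen_Ioi.mem_nhds hx] with y hy
    exact hpsiU y hy
  have hn := ((hb' x).fun_neg.fun_mul (hb' x)).fun_sub ((ha' x).fun_neg.fun_mul (hg' x))
  have hq := hn.fun_div hbsq (pow_ne_zero 2 hbx)
  have Hpsi := (hq.fun_mul (ha' x)).fun_add (((ha' x).fun_neg.fun_div (hb' x) hbx).fun_mul (hb' x))
  have HpsiU := Hpsi.const_mul (-(1 / 2) * θ)
  have Hm2num := (((((ha' x).const_mul (2:ℝ)).fun_mul (hb' x)).const_mul (lamBar ^ 2 / 2)).fun_mul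
      (hb' x)).fun_sub (((hasq x).const_mul (lamBar ^ 2 / 2)).fun_mul (hg' x))
  have Hm2 := Hm2num.fun_div hbsq (pow_ne_zero 2 hbx)
  have hevm : (fun y => partialX (partialT v) t y) =ᶠ[nhds x] (fun y =>
      (lamBar ^ 2 / 2 * (2 * partialX v t y * partialXX v t y) * partialXX v t y
        - lamBar ^ 2 / 2 * partialX v t y ^ 2 * partialX (partialXX v) t y)
        / partialXX v t y ^ 2) := by
    filter_upwards [isOpen_Ioi.mem_nhds hx] with y hy
    exact hm1set y hy
  have hm1 : partialT (partialX v) t x =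
      (lamBar ^ 2 / 2 * (2 * partialX v t x * partialXX v t x) * partialXX v t x
        - lamBar ^ 2 / 2 * partialX v t x ^ 2 * partialX (partialXX v) t x)
        / partialXX v t x ^ 2 := by
    rw [clairaut hsmooth t x]
    exact hm1set x hx
  have hm2 : partialT (partialXX v) t x = deriv (fun y =>
      (lamBar ^ 2 / 2 * (2 * partialX v t y * partialXX v t y) * partialXX v t y
        - lamBar ^ 2 / 2 * partialX v t y ^ 2 * partialX (partialXX v) t y)
        / partialXX v t y ^ 2) x := by
    rw [show partialT (partialXX v) t x = partialT (partialX (partialX v)) t x from rfl,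
        clairaut hA t x,
        show partialX (partialT (partialX v)) t x
          = deriv (fun y => partialT (partialX v) t y) x from rfl,
        show (fun y => partialT (partialX v) t y) = (fun y => partialX (partialT v) t y) from
          funext fun y => clairaut hsmooth t y,
        hevm.deriv_eq]
  rw [show partialT (fun t' x' => -(1 / 2) * θ *
        (-partialX v t' x' / partialXX v t' x' * partialX v t' x')) t x
      = deriv (fun s => -(1 / 2) * θ *
        (-partialX v s x / partialXX v s x * partialX v s x)) t from rfl,
      H1.deriv,
      show partialX (fun t' x' => -(1 / 2) * θ *
        (-partialX v t' x' / partialXX v t' x' * partialX v t' x')) t x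
      = deriv (fun y => -(1 / 2) * θ *
        (-partialX v t y / partialXX v t y * partialX v t y)) x from rfl,
      H2.deriv,
      show partialXX (fun t' x' => -(1 / 2) * θ *
        (-partialX v t' x' / partialXX v t' x' * partialX v t' x')) t x
      = deriv (fun y => partialX (fun t' x' => -(1 / 2) * θ *
        (-partialX v t' x' / partialXX v t' x' * partialX v t' x')) t y) x from rfl,
      hevU.deriv_eq, HpsiU.deriv,
      show partialX (fun a b => -partialX v a b / partialXX v a b * partialX v a b) t x
      = deriv (fun y => -partialX v t y / partialXX v t y * partialX v t y) x from rfl,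
      H2c.deriv,
      show partialXX (fun a b => -partialX v a b / partialXX v a b * partialX v a b) t x
      = deriv (fun y => partialX (fun a b =>
          -partialX v a b / partialXX v a b * partialX v a b) t y) x from rfl,
      hevu.deriv_eq, Hpsi.deriv,
      hm1, hm2, Hm2.deriv]
  field_simp
  ring
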